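/- Let a₁₂₃, a₁₂, a₁₃, a₂₃, b₁₃ ∈ ℝ, let A be a constant real 3×3 matrix and b ∈ ℝ³, and define the displacement field u : ℝ³ → ℝ³ by u(x) = A x + b + (u₁ⁱⁿʰ, u₂ⁱⁿʰ, u₃ⁱⁿʰ), where u₁ⁱⁿʰ = a₁₂₃ x₁x₂x₃ + a₁₂ x₁x₂ + a₁₃ x₁x₃ + a₂₃ x₂x₃, u₂ⁱⁿʰ = (1/2)(a₁₂ + a₁₂₃ x₃)(x₁² − x₂²) + b₁₃ x₁x₃ − a₁₃ x₂x₃, and u₃ⁱⁿʰ = −a₁₂₃ x₁²x₂ − (a₂₃ + b₁₃) x₁x₂ + (1/3) a₁₂₃ x₂³ − a₁₃ (x₁² − x₂²). Then u satisfies the trigonal universality constraints: ∂²u₃/∂x₁∂x₃ = ∂²u₃/∂x₂∂x₃ = ∂²u₃/∂x₃² = 0; ∂²uᵢ/∂x₁² + ∂²uᵢ/∂x₂² = 0 for i = 1,2,3; ∂²u₁/∂x₃² = ∂²u₂/∂x₃² = 0; 2∂²u₁/∂x₁∂x₃ − 2∂²u₂/∂x₂∂x₃ + ∂²u₃/∂x₁²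 − ∂²u₃/∂x₂² = 0; ∂²u₁/∂x₂∂x₃ + ∂²u₂/∂x₁∂x₃ + ∂²u₃/∂x₁∂x₂ = 0; and ∂²u₁/∂x₁∂x₃ + ∂²u₂/∂x₂∂x₃ = 0. Moreover ∂³u₃/∂x₂³ = 2a₁₂₃ identically, so u satisfies the additional strain-gradient universality constraint ∂³u₃/∂x₂³ = 0 if and only if a₁₂₃ = 0. (This underlies the propositions that for the trigonal strain-gradient classes ℤ₃, 𝔻₃ and the orthotropic class 𝔻₃ᵛ the universal displacements are those of the trigonal family with a₁₂₃ = 0.) -/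

import Mathlib

/-- Partial derivative of a scalar field on `ℝ³` in the `j`-th coordinate direction. -/
noncomputable def pd (j : Fin 3) (f : (Fin 3 → ℝ) → ℝ) : (Fin 3 → ℝ) → ℝ :=
  fun x => fderiv ℝ f x (Pi.single j 1)

/-- The `i`-th component of a vector field on `ℝ³`. -/
def comp (u : (Fin 3 → ℝ) → Fin 3 → ℝ) (i : Fin 3) : (Fin 3 → ℝ) → ℝ :=
  fun x => u x i

/-- Second partial derivative `∂²uᵢ/∂xⱼ∂xₖ` of the `i`-th component of `u`. -/
noncomputable def pdd (j k : Fin 3) (u : (Fin 3 → ℝ) → Fin 3 → ℝ) (i : Fin 3) :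
    (Fin 3 → ℝ) → ℝ :=
  pd j (pd k (comp u i))

lemma pd_const (j : Fin 3) (c : ℝ) : pd j (fun _ => c) = fun _ => 0 := by
  funext x; simp [pd]

lemma pd_coord (j i : Fin 3) : pd j (fun x => x i) = fun _ => if i = j then 1 else 0 := by
  funext x
  have h : fderiv ℝ (fun x : Fin 3 → ℝ => x i) x =
      (ContinuousLinearMap.proj i : (Fin 3 → ℝ) →L[ℝ] ℝ) :=
    (ContinuousLinearMap.proj i : (Fin 3 → ℝ) →L[ℝ] ℝ).fderiv (x := x)
  simp [pd, h, Pi.single_apply]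

lemma c00 : pd 0 (fun x : Fin 3 → ℝ => x 0) = fun _ => 1 := by rw [pd_coord]; simp
lemma c01 : pd 0 (fun x : Fin 3 → ℝ => x 1) = fun _ => 0 := by rw [pd_coord]; simp
lemma c02 : pd 0 (fun x : Fin 3 → ℝ => x 2) = fun _ => 0 := by rw [pd_coord]; simp
lemma c10 : pd 1 (fun x : Fin 3 → ℝ => x 0) = fun _ => 0 := by rw [pd_coord]; simp
lemma c11 : pd 1 (fun x : Fin 3 → ℝ => x 1) = fun _ => 1 := by rw [pd_coord]; simp
lemma c12 : pd 1 (fun x : Fin 3 → ℝ => x 2) = fun _ => 0 := by rw [pd_coord]; simp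
lemma c20 : pd 2 (fun x : Fin 3 → ℝ => x 0) = fun _ => 0 := by rw [pd_coord]; simp
lemma c21 : pd 2 (fun x : Fin 3 → ℝ => x 1) = fun _ => 0 := by rw [pd_coord]; simp
lemma c22 : pd 2 (fun x : Fin 3 → ℝ => x 2) = fun _ => 1 := by rw [pd_coord]; simp

lemma pd_add (j : Fin 3) {f g : (Fin 3 → ℝ) → ℝ} (hf : Differentiable ℝ f)
    (hg : Differentiable ℝ g) :
    pd j (fun x => f x + g x) = fun x => pd j f x + pd j g x := by
  funext x; simp [pd, fderiv_fun_add (hf x) (hg x)]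

lemma pd_mul (j : Fin 3) {f g : (Fin 3 → ℝ) → ℝ} (hf : Differentiable ℝ f)
    (hg : Differentiable ℝ g) :
    pd j (fun x => f x * g x) = fun x => f x * pd j g x + g x * pd j f x := by
  funext x; simp [pd, fderiv_fun_mul (hf x) (hg x)]


set_option maxHeartbeats 2000000 in
/-- The displacement field made of a homogeneous part plus the trigonal inhomogeneous
family satisfies all the trigonal universality constraints; moreover `∂³u₃/∂x₂³ = 2a₁₂₃`
identically, so the additional strain-gradient constraint `∂³u₃/∂x₂³ = 0` holds if and
only if `a₁₂₃ = 0`. -/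
theorem trigonal_inhomogeneous_field_constraints
    (a123 a12 a13 a23 b13 : ℝ)
    (A : Matrix (Fin 3) (Fin 3) ℝ) (b : Fin 3 → ℝ)
    (u : (Fin 3 → ℝ) → Fin 3 → ℝ)
    (hu : ∀ x, u x = A.mulVec x + b +
      ![a123 * (x 0 * x 1 * x 2) + a12 * (x 0 * x 1) + a13 * (x 0 * x 2) + a23 * (x 1 * x 2),
        (1 / 2) * (a12 + a123 * x 2) * (x 0 ^ 2 - x 1 ^ 2) + b13 * (x 0 * x 2)
          - a13 * (x 1 * x 2),
        -(a123 * (x 0 ^ 2 * x 1)) - (a23 + b13) * (x 0 * x 1) + (1 / 3) * a123 * x 1 ^ 3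
          - a13 * (x 0 ^ 2 - x 1 ^ 2)]) :
    ((∀ x, pdd 0 2 u 2 x = 0) ∧ (∀ x, pdd 1 2 u 2 x = 0) ∧ (∀ x, pdd 2 2 u 2 x = 0) ∧
     (∀ i : Fin 3, ∀ x, pdd 0 0 u i x + pdd 1 1 u i x = 0) ∧
     (∀ x, pdd 2 2 u 0 x = 0) ∧ (∀ x, pdd 2 2 u 1 x = 0) ∧
     (∀ x, 2 * pdd 0 2 u 0 x - 2 * pdd 1 2 u 1 x + pdd 0 0 u 2 x - pdd 1 1 u 2 x = 0) ∧
     (∀ x, pdd 1 2 u 0 x + pdd 0 2 u 1 x + pdd 0 1 u 2 x = 0) ∧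
     (∀ x, pdd 0 2 u 0 x + pdd 1 2 u 1 x = 0)) ∧
    (∀ x, pd 1 (pd 1 (pd 1 (comp u 2))) x = 2 * a123) ∧
    ((∀ x, pd 1 (pd 1 (pd 1 (comp u 2))) x = 0) ↔ a123 = 0) := by
  have h0 : comp u 0 = fun x => A 0 0 * x 0 + A 0 1 * x 1 + A 0 2 * x 2 + b 0
      + a123 * (x 0 * x 1 * x 2) + a12 * (x 0 * x 1) + a13 * (x 0 * x 2)
      + a23 * (x 1 * x 2) := by
    funext x
    simp [comp, hu, Matrix.mulVec, dotProduct, Fin.sum_univ_three]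
    ring
  have h1 : comp u 1 = fun x => A 1 0 * x 0 + A 1 1 * x 1 + A 1 2 * x 2 + b 1
      + (1/2) * a12 * (x 0 * x 0) + (-(1/2) * a12) * (x 1 * x 1)
      + (1/2) * a123 * (x 0 * x 0 * x 2) + (-(1/2) * a123) * (x 1 * x 1 * x 2)
      + b13 * (x 0 * x 2) + (-a13) * (x 1 * x 2) := by
    funext x
    simp [comp, hu, Matrix.mulVec, dotProduct, Fin.sum_univ_three]
    ring
  have h2 : comp u 2 = fun x => A 2 0 * x 0 + A 2 1 * x 1 + A 2 2 * x 2 + b 2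
      + (-a123) * (x 0 * x 0 * x 1) + (-(a23 + b13)) * (x 0 * x 1)
      + (1/3) * a123 * (x 1 * x 1 * x 1) + (-a13) * (x 0 * x 0) + a13 * (x 1 * x 1) := by
    funext x
    simp [comp, hu, Matrix.mulVec, dotProduct, Fin.sum_univ_three]
    ring
  -- first derivatives
  have d00 : pd 0 (comp u 0) = fun x => A 0 0 + a123 * (x 1 * x 2) + a12 * x 1
      + a13 * x 2 := by rw [h0]; (funext x; simp (disch := fun_prop) only [pd_add, pd_mul, c00, c01, c02, c10, c11, c12, c20, c21, c22, pd_const]; ring)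
  have d01 : pd 1 (comp u 0) = fun x => A 0 1 + a123 * (x 0 * x 2) + a12 * x 0
      + a23 * x 2 := by rw [h0]; (funext x; simp (disch := fun_prop) only [pd_add, pd_mul, c00, c01, c02, c10, c11, c12, c20, c21, c22, pd_const]; ring)
  have d02 : pd 2 (comp u 0) = fun x => A 0 2 + a123 * (x 0 * x 1) + a13 * x 0
      + a23 * x 1 := by rw [h0]; (funext x; simp (disch := fun_prop) only [pd_add, pd_mul, c00, c01, c02, c10, c11, c12, c20, c21, c22, pd_const]; ring)
  have d10 : pd 0 (comp u 1) = fun x => A 1 0 + a12 * x 0 + a123 * (x 0 * x 2)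
      + b13 * x 2 := by rw [h1]; (funext x; simp (disch := fun_prop) only [pd_add, pd_mul, c00, c01, c02, c10, c11, c12, c20, c21, c22, pd_const]; ring)
  have d11 : pd 1 (comp u 1) = fun x => A 1 1 + (-a12) * x 1 + (-a123) * (x 1 * x 2)
      + (-a13) * x 2 := by rw [h1]; (funext x; simp (disch := fun_prop) only [pd_add, pd_mul, c00, c01, c02, c10, c11, c12, c20, c21, c22, pd_const]; ring)
  have d12 : pd 2 (comp u 1) = fun x => A 1 2 + (1/2) * a123 * (x 0 * x 0)
      + (-(1/2) * a123) * (x 1 * x 1) + b13 * x 0 + (-a13) * x 1 := by rw [h1]; (funext x; simp (disch := fun_prop) only [pd_add, pd_mul, c00, c01, c02, c10, c11, c12, c20, c21, c22, pd_const]; ring)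
  have d20 : pd 0 (comp u 2) = fun x => A 2 0 + (-2) * a123 * (x 0 * x 1)
      + (-(a23 + b13)) * x 1 + (-2) * a13 * x 0 := by rw [h2]; (funext x; simp (disch := fun_prop) only [pd_add, pd_mul, c00, c01, c02, c10, c11, c12, c20, c21, c22, pd_const]; ring)
  have d21 : pd 1 (comp u 2) = fun x => A 2 1 + (-a123) * (x 0 * x 0)
      + (-(a23 + b13)) * x 0 + a123 * (x 1 * x 1) + 2 * a13 * x 1 := by rw [h2]; (funext x; simp (disch := fun_prop) only [pd_add, pd_mul, c00, c01, c02, c10, c11, c12, c20, c21, c22, pd_const]; ring)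
  have d22 : pd 2 (comp u 2) = fun x => A 2 2 + 0 := by rw [h2]; (funext x; simp (disch := fun_prop) only [pd_add, pd_mul, c00, c01, c02, c10, c11, c12, c20, c21, c22, pd_const]; ring)
  -- second derivatives
  have e002 : pd 0 (pd 2 (comp u 0)) = fun x => a123 * x 1 + a13 := by rw [d02]; (funext x; simp (disch := fun_prop) only [pd_add, pd_mul, c00, c01, c02, c10, c11, c12, c20, c21, c22, pd_const]; ring)
  have e012 : pd 1 (pd 2 (comp u 0)) = fun x => a123 * x 0 + a23 := by rw [d02]; (funext x; simp (disch := fun_prop) only [pd_add, pd_mul, c00, c01, c02, c10, c11, c12, c20, c21, c22, pd_const]; ring)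
  have e022 : pd 2 (pd 2 (comp u 0)) = fun _ => (0:ℝ) := by rw [d02]; (funext x; simp (disch := fun_prop) only [pd_add, pd_mul, c00, c01, c02, c10, c11, c12, c20, c21, c22, pd_const]; ring)
  have e000 : pd 0 (pd 0 (comp u 0)) = fun _ => (0:ℝ) := by rw [d00]; (funext x; simp (disch := fun_prop) only [pd_add, pd_mul, c00, c01, c02, c10, c11, c12, c20, c21, c22, pd_const]; ring)
  have e011 : pd 1 (pd 1 (comp u 0)) = fun _ => (0:ℝ) := by rw [d01]; (funext x; simp (disch := fun_prop) only [pd_add, pd_mul, c00, c01, c02, c10, c11, c12, c20, c21, c22, pd_const]; ring)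
  have e102 : pd 0 (pd 2 (comp u 1)) = fun x => a123 * x 0 + b13 := by rw [d12]; (funext x; simp (disch := fun_prop) only [pd_add, pd_mul, c00, c01, c02, c10, c11, c12, c20, c21, c22, pd_const]; ring)
  have e112 : pd 1 (pd 2 (comp u 1)) = fun x => (-a123) * x 1 + (-a13) := by
    rw [d12]; (funext x; simp (disch := fun_prop) only [pd_add, pd_mul, c00, c01, c02, c10, c11, c12, c20, c21, c22, pd_const]; ring)
  have e122 : pd 2 (pd 2 (comp u 1)) = fun _ => (0:ℝ) := by rw [d12]; (funext x; simp (disch := fun_prop) only [pd_add, pd_mul, c00, c01, c02, c10, c11, c12, c20, c21, c22, pd_const]; ring)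
  have e100 : pd 0 (pd 0 (comp u 1)) = fun x => a12 + a123 * x 2 := by rw [d10]; (funext x; simp (disch := fun_prop) only [pd_add, pd_mul, c00, c01, c02, c10, c11, c12, c20, c21, c22, pd_const]; ring)
  have e111 : pd 1 (pd 1 (comp u 1)) = fun x => (-a12) + (-a123) * x 2 := by
    rw [d11]; (funext x; simp (disch := fun_prop) only [pd_add, pd_mul, c00, c01, c02, c10, c11, c12, c20, c21, c22, pd_const]; ring)
  have e202 : pd 0 (pd 2 (comp u 2)) = fun _ => (0:ℝ) := by rw [d22]; (funext x; simp (disch := fun_prop) only [pd_add, pd_mul, c00, c01, c02, c10, c11, c12, c20, c21, c22, pd_const]; ring)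
  have e212 : pd 1 (pd 2 (comp u 2)) = fun _ => (0:ℝ) := by rw [d22]; (funext x; simp (disch := fun_prop) only [pd_add, pd_mul, c00, c01, c02, c10, c11, c12, c20, c21, c22, pd_const]; ring)
  have e222 : pd 2 (pd 2 (comp u 2)) = fun _ => (0:ℝ) := by rw [d22]; (funext x; simp (disch := fun_prop) only [pd_add, pd_mul, c00, c01, c02, c10, c11, c12, c20, c21, c22, pd_const]; ring)
  have e200 : pd 0 (pd 0 (comp u 2)) = fun x => (-2) * a123 * x 1 + (-2) * a13 := by
    rw [d20]; (funext x; simp (disch := fun_prop) only [pd_add, pd_mul, c00, c01, c02, c10, c11, c12, c20, c21, c22, pd_const]; ring)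
  have e211 : pd 1 (pd 1 (comp u 2)) = fun x => 2 * a123 * x 1 + 2 * a13 := by
    rw [d21]; (funext x; simp (disch := fun_prop) only [pd_add, pd_mul, c00, c01, c02, c10, c11, c12, c20, c21, c22, pd_const]; ring)
  have e201 : pd 0 (pd 1 (comp u 2)) = fun x => (-2) * a123 * x 0 + (-(a23 + b13)) := by
    rw [d21]; (funext x; simp (disch := fun_prop) only [pd_add, pd_mul, c00, c01, c02, c10, c11, c12, c20, c21, c22, pd_const]; ring)
  have t2 : pd 1 (pd 1 (pd 1 (comp u 2))) = fun _ => 2 * a123 := by rw [e211]; (funext x; simp (disch := fun_prop) only [pd_add, pd_mul, c00, c01, c02, c10, c11, c12, c20, c21, c22, pd_const]; ring)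
  refine ⟨⟨?_, ?_, ?_, ?_, ?_, ?_, ?_, ?_, ?_⟩, ?_, ?_⟩
  · intro x; simp [pdd, e202]
  · intro x; simp [pdd, e212]
  · intro x; simp [pdd, e222]
  · intro i x
    fin_cases i
    · simp [pdd, e000, e011]
    · simp [pdd, e100, e111]; ring
    · simp [pdd, e200, e211]; ring
  · intro x; simp [pdd, e022]
  · intro x; simp [pdd, e122]
  · intro x; simp [pdd, e002, e112, e200, e211]; ring
  · intro x; simp [pdd, e012, e102, e201]; ring
  · intro x; simp [pdd, e002, e112]; ring
  · intro x; rw [t2]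
  · constructor
    · intro h
      have h0' := h 0
      rw [t2] at h0'
      simp only at h0'
      linarith
    · intro h x
      rw [t2, h]; ring
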